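/- arXiv:2507.08918 — 3 statements merged into one kernel-verified Lean document; each statement's English description precedes it below -/
import Mathlib

section
/- Under the interactive fixed effects data generating process, the exact fit assumption, and invertibility of the Gram matrix of pre-treatment common factors, the estimation error of the synthetic-control ATT estimate in the single post-treatment period T = T0 + 1 satisfies: tau_hat - tau = (1/n1) * [lambda_T * (lambda_pre' lambda_pre)^{-1} * lambda_pre' * sum over treated i of (sum over donors j of w_hat_{ij} * eps_{j,pre} - eps_{i,pre})] + (1/n1) * [sum over treated i of (eps_{iT} - sum over donors j of w_hat_{ij} * eps_{jT})], where eps_{i,pre} denotes the (T0 x 1) vector of error terms of unit i over the pre-treatment periods. -/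
/-!
Under exact fit the covariate terms of the synthetic-control gap `y_{it}(0) - ∑ⱼ ŵ_{ij} y_{jt}(0)`
cancel, leaving `λ_t ⬝ (μ_i - ∑ⱼ ŵ_{ij} μ_j)` plus an error term. Summed over treated units, the
gap vanishes in every pre-treatment period, so the aggregated loading discrepancy `S` solves the
linear system `λ_pre S = ∑ᵢ (∑ⱼ ŵ_{ij} ε_{j,pre} - ε_{i,pre})`; invertibility of the Gram matrix
recovers `S` by least squares, and `τ̂ - τ` is the averaged gap in period `T`.
-/

open Matrix

theorem Matrix.eq_inv_gram_mul_transpose_mulVec {m n R : Type*} [Fintype m] [Fintype n]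
    [DecidableEq n] [CommRing R] {A : Matrix m n R} (hA : IsUnit (Aᵀ * A).det)
    {x : n → R} {b : m → R} (hx : A *ᵥ x = b) :
    x = ((Aᵀ * A)⁻¹ * Aᵀ) *ᵥ b := by
  rw [← hx, mulVec_mulVec, Matrix.mul_assoc, nonsing_inv_mul _ hA, one_mulVec]

theorem sub_dotProduct_eq_of_eq_vecMul {ι K F R : Type*} [Fintype ι] [Fintype K] [Fintype F]
    [CommRing R] (θ : K → R) (l : F → R) (X : Matrix ι K R) (M : Matrix ι F R) {e y : ι → R}
    (hy : ∀ j, y j = θ ⬝ᵥ X j + l ⬝ᵥ M j + e j) (w : ι → R) {x : K → R} (hx : x = w ᵥ* X)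
    (μ : F → R) (ε : R) :
    (θ ⬝ᵥ x + l ⬝ᵥ μ + ε) - w ⬝ᵥ y = l ⬝ᵥ (μ - w ᵥ* M) + (ε - w ⬝ᵥ e) := by
  have hy' : y = X *ᵥ θ + M *ᵥ l + e := by
    ext j
    simp only [hy, Pi.add_apply, mulVec, dotProduct_comm]
  subst hx
  simp only [hy', dotProduct_add, dotProduct_mulVec, dotProduct_sub]
  rw [dotProduct_comm θ, dotProduct_comm l, dotProduct_comm l]
  ring

theorem abadie_representation_general (n0 n1 T0 F K : ℕ)
    -- time-varying coefficients and common factors over periods 1,...,T0 and T = T0+1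
    (θ : Fin (T0 + 1) → Fin K → ℝ) (Λ : Fin (T0 + 1) → Fin F → ℝ)
    -- covariates, factor loadings and errors of the donors (`d`) and treated units (`t`)
    (xd : Fin n0 → Fin K → ℝ) (xt : Fin n1 → Fin K → ℝ)
    (mud : Fin n0 → Fin F → ℝ) (muT : Fin n1 → Fin F → ℝ)
    (epsd : Fin n0 → Fin (T0 + 1) → ℝ) (epst : Fin n1 → Fin (T0 + 1) → ℝ)
    -- untreated potential outcomes, generated by the interactive fixed effects model
    (y0d : Fin n0 → Fin (T0 + 1) → ℝ) (y0t : Fin n1 → Fin (T0 + 1) → ℝ)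
    (hy0d : ∀ j t, y0d j t = (∑ k, θ t k * xd j k) + (∑ f, Λ t f * mud j f) + epsd j t)
    (hy0t : ∀ i t, y0t i t = (∑ k, θ t k * xt i k) + (∑ f, Λ t f * muT i f) + epst i t)
    -- observed treated outcomes at time T
    (y1 : Fin n1 → ℝ)
    -- the weights
    (w : Fin n1 → Fin n0 → ℝ)
    -- the matrix of pre-treatment common factors, and invertibility of its Gram matrix
    (lpre : Matrix (Fin T0) (Fin F) ℝ) (hlpre : ∀ t f, lpre t f = Λ t.castSucc f)
    (hinv : IsUnit (lpreᵀ * lpre).det)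
    -- Exact Fit: for outcomes in pre-treatment periods, and for covariates
    (hfit_y : ∀ i (t : Fin T0), y0t i t.castSucc = ∑ j, w i j * y0d j t.castSucc)
    (hfit_x : ∀ i k, xt i k = ∑ j, w i j * xd j k)
    -- true and estimated ATT in the post-treatment period T
    (τ τhat : ℝ)
    (hτ : τ = (1 / (n1 : ℝ)) * ∑ i, (y1 i - y0t i (Fin.last T0)))
    (hτhat : τhat = (1 / (n1 : ℝ)) * ∑ i, (y1 i - ∑ j, w i j * y0d j (Fin.last T0))) :
    τhat - τ =
      (1 / (n1 : ℝ)) *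
        ((fun f => Λ (Fin.last T0) f) ⬝ᵥ
          (((lpreᵀ * lpre)⁻¹ * lpreᵀ) *ᵥ
            (fun t : Fin T0 =>
              ∑ i, ((∑ j, w i j * epsd j t.castSucc) - epst i t.castSucc))))
      + (1 / (n1 : ℝ)) *
          ∑ i, (epst i (Fin.last T0) - ∑ j, w i j * epsd j (Fin.last T0)) := by
  set S : Fin F → ℝ := ∑ i, (muT i - w i ᵥ* mud)
  have hgap : ∀ t, ∑ i, (y0t i t - ∑ j, w i j * y0d j t)
      = Λ t ⬝ᵥ S + ∑ i, (epst i t - ∑ j, w i j * epsd j t) := fun t => by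
    rw [dotProduct_sum, ← Finset.sum_add_distrib]
    refine Finset.sum_congr rfl fun i _ => ?_
    rw [hy0t]
    exact sub_dotProduct_eq_of_eq_vecMul (θ t) (Λ t) xd mud (fun j => hy0d j t) (w i)
      (funext (hfit_x i)) (muT i) (epst i t)
  have hpre : lpre *ᵥ S = fun t : Fin T0 =>
      ∑ i, ((∑ j, w i j * epsd j t.castSucc) - epst i t.castSucc) := funext fun t => by
    have h := hgap t.castSucc
    simp only [hfit_y, sub_self, Finset.sum_const_zero] at h
    have hrow : lpre t = Λ t.castSucc := funext (hlpre t)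
    rw [mulVec, hrow]
    simp only [← neg_sub (epst _ _), Finset.sum_neg_distrib]
    linarith
  rw [← eq_inv_gram_mul_transpose_mulVec hinv hpre, ← mul_add, ← hgap, hτ, hτhat, ← mul_sub,
    ← Finset.sum_sub_distrib]
  simp only [sub_sub_sub_cancel_left]

/-- Abadie's representation: under the interactive fixed effects DGP, the exact
fit assumption, and invertibility of the Gram matrix of pre-treatment common factors, the
estimation error of the synthetic-control ATT estimate in the single post-treatment period
`T = T0 + 1` satisfies
`τ̂ - τ = (1/n1) * [λ_T (λ_pre' λ_pre)⁻¹ λ_pre' ∑_i (∑_j ŵ_{ij} ε_{j,pre} - ε_{i,pre})]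
        + (1/n1) * [∑_i (ε_{iT} - ∑_j ŵ_{ij} ε_{jT})]`. -/
theorem abadie_representation (n0 n1 T0 F K : ℕ) (hn1 : 0 < n1) (hT0 : 0 < T0)
    -- time-varying coefficients and common factors over periods 1,...,T0 and T = T0+1
    (θ : Fin (T0 + 1) → Fin K → ℝ) (Λ : Fin (T0 + 1) → Fin F → ℝ)
    -- covariates, factor loadings and errors of the donors (`d`) and treated units (`t`)
    (xd : Fin n0 → Fin K → ℝ) (xt : Fin n1 → Fin K → ℝ)
    (mud : Fin n0 → Fin F → ℝ) (muT : Fin n1 → Fin F → ℝ)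
    (epsd : Fin n0 → Fin (T0 + 1) → ℝ) (epst : Fin n1 → Fin (T0 + 1) → ℝ)
    -- untreated potential outcomes, generated by the interactive fixed effects model
    (y0d : Fin n0 → Fin (T0 + 1) → ℝ) (y0t : Fin n1 → Fin (T0 + 1) → ℝ)
    (hy0d : ∀ j t, y0d j t = (∑ k, θ t k * xd j k) + (∑ f, Λ t f * mud j f) + epsd j t)
    (hy0t : ∀ i t, y0t i t = (∑ k, θ t k * xt i k) + (∑ f, Λ t f * muT i f) + epst i t)
    -- observed treated outcomes at time T
    (y1 : Fin n1 → ℝ)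
    -- the weights
    (w : Fin n1 → Fin n0 → ℝ)
    -- the matrix of pre-treatment common factors, and invertibility of its Gram matrix
    (lpre : Matrix (Fin T0) (Fin F) ℝ) (hlpre : ∀ t f, lpre t f = Λ t.castSucc f)
    (hinv : IsUnit (lpreᵀ * lpre).det)
    -- Exact Fit: for outcomes in pre-treatment periods, and for covariates
    (hfit_y : ∀ i (t : Fin T0), y0t i t.castSucc = ∑ j, w i j * y0d j t.castSucc)
    (hfit_x : ∀ i k, xt i k = ∑ j, w i j * xd j k)
    -- true and estimated ATT in the post-treatment period T
    (τ τhat : ℝ)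
    (hτ : τ = (1 / (n1 : ℝ)) * ∑ i, (y1 i - y0t i (Fin.last T0)))
    (hτhat : τhat = (1 / (n1 : ℝ)) * ∑ i, (y1 i - ∑ j, w i j * y0d j (Fin.last T0))) :
    τhat - τ =
      (1 / (n1 : ℝ)) *
        ((fun f => Λ (Fin.last T0) f) ⬝ᵥ
          (((lpreᵀ * lpre)⁻¹ * lpreᵀ) *ᵥ
            (fun t : Fin T0 =>
              ∑ i, ((∑ j, w i j * epsd j t.castSucc) - epst i t.castSucc))))
      + (1 / (n1 : ℝ)) *
          ∑ i, (epst i (Fin.last T0) - ∑ j, w i j * epsd j (Fin.last T0)) :=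
  abadie_representation_general n0 n1 T0 F K θ Λ xd xt mud muT epsd epst y0d y0t hy0d hy0t y1 w lpre
    hlpre hinv hfit_y hfit_x τ τhat hτ hτhat
end

section
/- Let N >= 2 and T >= 2, and let H be the ((N-1)+(T-1)) x ((N-1)+(T-1)) block matrix [[T * I_{N-1}, 1_{(N-1) x (T-1)}], [1_{(T-1) x (N-1)}, N * I_{T-1}]]. Then H is invertible and its inverse is the block matrix [[ (1/T) * (I_{N-1} + ((T-1)/(T+N-1)) * 1_{(N-1) x (N-1)}), -(1/(T+N-1)) * 1_{(N-1) x (T-1)} ], [ -(1/(T+N-1)) * 1_{(T-1) x (N-1)}, (1/N) * (I_{T-1} + ((N-1)/(T+N-1)) * 1_{(T-1) x (T-1)}) ]]. -/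
/-!
For an all-ones matrix `J`, `J * J = c • J` with `c` the inner dimension, so block products of
matrices of the form `x • 1 + y • J` keep that form and `H * G = 1` reduces to scalar identities
between the coefficients. For `H = [[a • 1, J], [J, b • 1]]` with blocks of sizes `|m|` and `|n|`
they are solved with the single new denominator `d = a b - |m| |n|`, which for `a = T`, `b = N`,
`|m| = N - 1`, `|n| = T - 1` is `T + N - 1`.
-/

open Matrix

variable {m n k K : Type*} [Field K]

theorem Matrix.of_one_mul_of_one [Fintype n] :
    (of fun (_ : m) (_ : n) => (1 : K)) * (of fun (_ : n) (_ : k) => (1 : K)) =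
      (Fintype.card n : K) • of fun _ _ => 1 := by
  ext i j
  simp [mul_apply]

section

variable [Fintype m] [Fintype n] [DecidableEq m] [DecidableEq n]

theorem Matrix.fromBlocks_smul_one_of_one_mul_eq_one {a b d : K} (ha : a ≠ 0) (hb : b ≠ 0)
    (hd : a * b - Fintype.card m * Fintype.card n = d) (hd0 : d ≠ 0) :
    fromBlocks (a • (1 : Matrix m m K)) (of fun _ _ => 1) (of fun _ _ => 1) (b • (1 : Matrix n n K)) *
      fromBlocks ((1 / a) • (1 + ((Fintype.card n : K) / d) • of fun _ _ => 1))
        ((-(1 / d)) • of fun _ _ => 1) ((-(1 / d)) • of fun _ _ => 1)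
        ((1 / b) • (1 + ((Fintype.card m : K) / d) • of fun _ _ => 1)) = 1 := by
  rw [fromBlocks_multiply, ← fromBlocks_one]
  simp only [Matrix.smul_mul, Matrix.mul_smul, Matrix.mul_add, Matrix.one_mul, Matrix.mul_one,
    of_one_mul_of_one]
  congr 1 <;> match_scalars <;> field_simp <;> subst hd <;> ring

theorem Matrix.isUnit_fromBlocks_smul_one_of_one_and_inv_eq {a b d : K} (ha : a ≠ 0) (hb : b ≠ 0)
    (hd : a * b - Fintype.card m * Fintype.card n = d) (hd0 : d ≠ 0) :
    IsUnit (fromBlocks (a • (1 : Matrix m m K)) (of fun _ _ => 1) (of fun _ _ => 1)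
        (b • (1 : Matrix n n K))) ∧
      (fromBlocks (a • (1 : Matrix m m K)) (of fun _ _ => 1) (of fun _ _ => 1)
        (b • (1 : Matrix n n K)))⁻¹ =
      fromBlocks ((1 / a) • (1 + ((Fintype.card n : K) / d) • of fun _ _ => 1))
        ((-(1 / d)) • of fun _ _ => 1) ((-(1 / d)) • of fun _ _ => 1)
        ((1 / b) • (1 + ((Fintype.card m : K) / d) • of fun _ _ => 1)) :=
  have h := fromBlocks_smul_one_of_one_mul_eq_one ha hb hd hd0
  ⟨IsUnit.of_mul_eq_one _ h, inv_eq_right_inv h⟩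

end

/-- for `N ≥ 2` and `T ≥ 2`, the block matrix
`H = [[T I_{N-1}, 1_{(N-1)×(T-1)}], [1_{(T-1)×(N-1)}, N I_{T-1}]]` is invertible, with inverse
`[[ (1/T)(I_{N-1} + ((T-1)/(T+N-1)) 1_{(N-1)×(N-1)}), -(1/(T+N-1)) 1_{(N-1)×(T-1)} ],
  [ -(1/(T+N-1)) 1_{(T-1)×(N-1)}, (1/N)(I_{T-1} + ((N-1)/(T+N-1)) 1_{(T-1)×(T-1)}) ]]`. -/
theorem block_H_inverse (N T : ℕ) (hN : 2 ≤ N) (hT : 2 ≤ T) :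
    IsUnit (Matrix.fromBlocks
        ((T : ℝ) • (1 : Matrix (Fin (N - 1)) (Fin (N - 1)) ℝ))
        (Matrix.of fun (_ : Fin (N - 1)) (_ : Fin (T - 1)) => (1 : ℝ))
        (Matrix.of fun (_ : Fin (T - 1)) (_ : Fin (N - 1)) => (1 : ℝ))
        ((N : ℝ) • (1 : Matrix (Fin (T - 1)) (Fin (T - 1)) ℝ))) ∧
    (Matrix.fromBlocks
        ((T : ℝ) • (1 : Matrix (Fin (N - 1)) (Fin (N - 1)) ℝ))
        (Matrix.of fun (_ : Fin (N - 1)) (_ : Fin (T - 1)) => (1 : ℝ))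
        (Matrix.of fun (_ : Fin (T - 1)) (_ : Fin (N - 1)) => (1 : ℝ))
        ((N : ℝ) • (1 : Matrix (Fin (T - 1)) (Fin (T - 1)) ℝ)))⁻¹ =
      Matrix.fromBlocks
        ((1 / (T : ℝ)) • ((1 : Matrix (Fin (N - 1)) (Fin (N - 1)) ℝ) +
          (((T : ℝ) - 1) / ((T : ℝ) + (N : ℝ) - 1)) •
            Matrix.of fun (_ : Fin (N - 1)) (_ : Fin (N - 1)) => (1 : ℝ)))
        ((-(1 / ((T : ℝ) + (N : ℝ) - 1))) •
          Matrix.of fun (_ : Fin (N - 1)) (_ : Fin (T - 1)) => (1 : ℝ))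
        ((-(1 / ((T : ℝ) + (N : ℝ) - 1))) •
          Matrix.of fun (_ : Fin (T - 1)) (_ : Fin (N - 1)) => (1 : ℝ))
        ((1 / (N : ℝ)) • ((1 : Matrix (Fin (T - 1)) (Fin (T - 1)) ℝ) +
          (((N : ℝ) - 1) / ((T : ℝ) + (N : ℝ) - 1)) •
            Matrix.of fun (_ : Fin (T - 1)) (_ : Fin (T - 1)) => (1 : ℝ))) := by
  have hp : (Fintype.card (Fin (N - 1)) : ℝ) = N - 1 := by
    rw [Fintype.card_fin, Nat.cast_pred (by omega)]
  have hq : (Fintype.card (Fin (T - 1)) : ℝ) = T - 1 := by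
    rw [Fintype.card_fin, Nat.cast_pred (by omega)]
  have hT0 : (T : ℝ) ≠ 0 := by positivity
  have hN0 : (N : ℝ) ≠ 0 := by positivity
  have hd0 : (T : ℝ) + N - 1 ≠ 0 := by
    have : (2 : ℝ) ≤ T := by exact_mod_cast hT
    have : (0 : ℝ) ≤ N := N.cast_nonneg
    exact ne_of_gt (by linarith)
  have hd : (T : ℝ) * N - Fintype.card (Fin (N - 1)) * Fintype.card (Fin (T - 1)) = T + N - 1 := by
    rw [hp, hq]; ring
  simpa only [hp, hq] using isUnit_fromBlocks_smul_one_of_one_and_inv_eq hT0 hN0 hd hd0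
end

section
/- Let n0 >= 1, n1 >= 1, N = n0 + n1, T >= 2, let Z be the NT x (1 + (N-1) + (T-1)) two-way fixed effects design matrix, let M = I_{NT} - Z (Z'Z)^{-1} Z', and let D in R^{NT} be the vector whose (i,t) entry equals 1 if i > n0 and t = T, and 0 otherwise. Then the quadratic form D' M D equals (T-1) * n0 * n1 / ((n0 + n1) * T). -/
/-!
The treatment vector is an outer product `D (i, t) = u i * v t`, with `u` the indicator of the
treated units and `v` that of the last period. Its double-demeaned version
`r (i, t) = (u i - ū) * (v t - v̄)` has vanishing row and column sums, so it is orthogonal to every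
column of `Z`, while `D - r = (i, t) ↦ u i * v̄ + ū * (v t - v̄)` lies in the column space of `Z`.
Hence `M D = r`, and `D' M D = (∑ i, u i * (u i - ū)) * (∑ t, v t * (v t - v̄))`, which equals
`(n0 n1 / N) * ((T - 1) / T)`.
-/

open Matrix

/-- The two-way fixed effects design matrix: rows indexed by pairs `(i, t)` of a unit and a
time period; columns consist of an intercept column of ones, unit dummies for units `i ≠ 0`,
and time dummies for periods `t ≠ 0`. -/
def designZ (N T : ℕ) :
    Matrix (Fin N × Fin T) (Unit ⊕ ({j : Fin N // (j : ℕ) ≠ 0} ⊕ {s : Fin T // (s : ℕ) ≠ 0})) ℝ :=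
  fun p c =>
    match c with
    | Sum.inl _ => 1
    | Sum.inr (Sum.inl j) => if p.1 = j.1 then 1 else 0
    | Sum.inr (Sum.inr s) => if p.2 = s.1 then 1 else 0

open Finset
open scoped BigOperators

section LeastSquares

variable {m n R : Type*} [Fintype m] [Fintype n] [DecidableEq n]

theorem hat_mulVec_eq_of_transpose_mulVec_sub_eq_zero [CommRing R] {Z : Matrix m n R}
    (hZ : IsUnit (Zᵀ * Z).det) {y : m → R} {β : n → R} (hβ : Zᵀ *ᵥ (y - Z *ᵥ β) = 0) :
    (Z * (Zᵀ * Z)⁻¹ * Zᵀ) *ᵥ y = Z *ᵥ β := by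
  have normal_eq : Zᵀ *ᵥ y = (Zᵀ * Z) *ᵥ β := by
    rwa [mulVec_sub, sub_eq_zero, mulVec_mulVec] at hβ
  rw [← mulVec_mulVec, normal_eq, mulVec_mulVec, Matrix.mul_assoc, nonsing_inv_mul _ hZ,
    Matrix.mul_one]

theorem isUnit_det_transpose_mul_self {Z : Matrix m n ℝ} (hZ : Function.Injective Z.mulVec) :
    IsUnit (Zᵀ * Z).det := by
  rw [← isUnit_iff_isUnit_det, ← conjTranspose_eq_transpose_of_trivial]
  exact (PosDef.conjTranspose_mul_self Z hZ).isUnit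

end LeastSquares

section Averages

variable {ι K : Type*} [Fintype ι] [Field K] [CharZero K]

theorem sum_sub_expect (u : ι → K) : ∑ i, (u i - 𝔼 j, u j) = 0 := by
  rw [sum_sub_distrib, sum_const, card_univ, nsmul_eq_mul, Fintype.card_mul_expect, sub_self]

theorem sum_indicator_mul_sub_expect [DecidableEq ι] (s : Finset ι) :
    ∑ i, (if i ∈ s then (1 : K) else 0) * ((if i ∈ s then 1 else 0) - 𝔼 j, if j ∈ s then 1 else 0) =
      #s * (1 - #s / Fintype.card ι) := by
  have hmean : (𝔼 j, if j ∈ s then (1 : K) else 0) = #s / Fintype.card ι := by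
    rw [Fintype.expect_eq_sum_div_card, sum_boole, filter_mem_eq_inter, univ_inter]
  rw [hmean, ← sum_subset (subset_univ s) (fun i _ hi => by simp [hi])]
  simp +contextual [mul_sub]

end Averages

theorem Fintype.sum_ite_eq_val {α M : Type*} [AddCommMonoid M] [DecidableEq α] {P : α → Prop}
    [DecidablePred P] [Fintype {a // P a}] (a : α) (f : {a // P a} → M) :
    ∑ j : {a // P a}, (if a = j.1 then f j else 0) = if h : P a then f ⟨a, h⟩ else 0 := by
  split_ifs with h
  · rw [← Fintype.sum_ite_eq ⟨a, h⟩ f]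
    exact Fintype.sum_congr _ _ fun j => by simp [Subtype.ext_iff]
  · exact Fintype.sum_eq_zero _ fun j => if_neg fun hj : a = j.1 => h (hj ▸ j.2)

section TwoWayDesign

variable {N T : ℕ}

theorem designZ_mulVec_apply
    (x : Unit ⊕ ({j : Fin N // (j : ℕ) ≠ 0} ⊕ {s : Fin T // (s : ℕ) ≠ 0}) → ℝ)
    (p : Fin N × Fin T) :
    (designZ N T *ᵥ x) p = x (Sum.inl ()) +
      (if h : (p.1 : ℕ) ≠ 0 then x (Sum.inr (Sum.inl ⟨p.1, h⟩)) else 0) +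
      (if h : (p.2 : ℕ) ≠ 0 then x (Sum.inr (Sum.inr ⟨p.2, h⟩)) else 0) := by
  simp only [mulVec, dotProduct, Fintype.sum_sum_type, designZ, Fintype.sum_unique, one_mul,
    ite_mul, zero_mul, Fintype.sum_ite_eq_val, add_assoc]

theorem transpose_designZ_mulVec_eq_zero {r : Fin N × Fin T → ℝ}
    (hrow : ∀ i, ∑ t, r (i, t) = 0) (hcol : ∀ t, ∑ i, r (i, t) = 0) :
    (designZ N T)ᵀ *ᵥ r = 0 := by
  funext c
  simp only [mulVec, dotProduct, transpose_apply, Pi.zero_apply]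
  rcases c with _ | j | s <;> simp only [designZ, ite_mul, one_mul, zero_mul]
  · simp [Fintype.sum_prod_type, hrow]
  · rw [Fintype.sum_prod_type_right]
    simp [hrow]
  · rw [Fintype.sum_prod_type]
    simp [hcol]

variable [NeZero N] [NeZero T]

def twoWayCoeff (f : Fin N → ℝ) (g : Fin T → ℝ) :
    Unit ⊕ ({j : Fin N // (j : ℕ) ≠ 0} ⊕ {s : Fin T // (s : ℕ) ≠ 0}) → ℝ
  | Sum.inl _ => f 0 + g 0
  | Sum.inr (Sum.inl j) => f j - f 0
  | Sum.inr (Sum.inr s) => g s - g 0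

theorem designZ_mulVec_twoWayCoeff (f : Fin N → ℝ) (g : Fin T → ℝ) :
    designZ N T *ᵥ twoWayCoeff f g = fun p => f p.1 + g p.2 := by
  funext ⟨i, t⟩
  have unit_term : (if h : (i : ℕ) ≠ 0 then twoWayCoeff f g (Sum.inr (Sum.inl ⟨i, h⟩)) else 0) =
      f i - f 0 := by
    split_ifs with h
    · rfl
    · rw [not_not, Fin.val_eq_zero_iff] at h
      rw [h, sub_self]
  have time_term : (if h : (t : ℕ) ≠ 0 then twoWayCoeff f g (Sum.inr (Sum.inr ⟨t, h⟩)) else 0) =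
      g t - g 0 := by
    split_ifs with h
    · rfl
    · rw [not_not, Fin.val_eq_zero_iff] at h
      rw [h, sub_self]
  rw [designZ_mulVec_apply]
  dsimp only
  rw [unit_term, time_term, twoWayCoeff]
  ring

theorem designZ_mulVec_injective : Function.Injective (designZ N T).mulVec := by
  refine (injective_iff_map_eq_zero (designZ N T).mulVecLin).mpr fun x hx => ?_
  have hZx (p : Fin N × Fin T) : (designZ N T *ᵥ x) p = 0 := congrFun hx p
  have intercept : x (Sum.inl ()) = 0 := by simpa [designZ_mulVec_apply] using hZx (0, 0)
  funext c
  rcases c with ⟨⟩ | j | s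
  · exact intercept
  · simpa [designZ_mulVec_apply, intercept, j.2] using hZx (j, 0)
  · simpa [designZ_mulVec_apply, intercept, s.2] using hZx (0, s)

end TwoWayDesign

section OuterProduct

variable {N T : ℕ} [NeZero N] [NeZero T] (u : Fin N → ℝ) (v : Fin T → ℝ)

theorem annihilator_mulVec_outer :
    (1 - designZ N T * ((designZ N T)ᵀ * designZ N T)⁻¹ * (designZ N T)ᵀ) *ᵥ
        (fun p => u p.1 * v p.2) =
      fun p => (u p.1 - 𝔼 i, u i) * (v p.2 - 𝔼 t, v t) := by
  set ubar := 𝔼 i, u i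
  set vbar := 𝔼 t, v t
  have hu : ∑ i, (u i - ubar) = 0 := sum_sub_expect u
  have hv : ∑ t, (v t - vbar) = 0 := sum_sub_expect v
  have fit : designZ N T *ᵥ twoWayCoeff (fun i => u i * vbar) (fun t => ubar * (v t - vbar)) =
      (fun p => u p.1 * v p.2) - fun p => (u p.1 - ubar) * (v p.2 - vbar) := by
    rw [designZ_mulVec_twoWayCoeff]
    funext p
    simp only [Pi.sub_apply]
    ring
  have normal_eq : (designZ N T)ᵀ *ᵥ ((fun p => u p.1 * v p.2) -
      designZ N T *ᵥ twoWayCoeff (fun i => u i * vbar) (fun t => ubar * (v t - vbar))) = 0 := by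
    rw [fit, sub_sub_cancel]
    refine transpose_designZ_mulVec_eq_zero (fun i => ?_) (fun t => ?_)
    · simp only [← mul_sum, hv, mul_zero]
    · simp only [← sum_mul, hu, zero_mul]
  rw [sub_mulVec, one_mulVec, hat_mulVec_eq_of_transpose_mulVec_sub_eq_zero
    (isUnit_det_transpose_mul_self designZ_mulVec_injective) normal_eq, fit, sub_sub_cancel]

theorem outer_dotProduct_annihilator_mulVec_outer :
    (fun p : Fin N × Fin T => u p.1 * v p.2) ⬝ᵥ
        ((1 - designZ N T * ((designZ N T)ᵀ * designZ N T)⁻¹ * (designZ N T)ᵀ) *ᵥ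
          fun p => u p.1 * v p.2) =
      (∑ i, u i * (u i - 𝔼 j, u j)) * ∑ t, v t * (v t - 𝔼 s, v s) := by
  rw [annihilator_mulVec_outer, dotProduct, Fintype.sum_prod_type, sum_mul_sum]
  refine sum_congr rfl fun i _ => sum_congr rfl fun t _ => ?_
  ring

end OuterProduct

theorem Fin.card_filter_le_val (n0 n1 : ℕ) : #{i : Fin (n0 + n1) | n0 ≤ (i : ℕ)} = n1 := by
  have h := card_filter_add_card_filter_not (s := univ) fun i : Fin (n0 + n1) => (i : ℕ) < n0
  simp only [not_lt, Fin.card_filter_val_lt, card_univ, Fintype.card_fin] at h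
  omega

theorem Fin.card_filter_val_eq_sub_one {T : ℕ} (hT : 1 ≤ T) : #{t : Fin T | (t : ℕ) = T - 1} = 1 :=
  card_eq_one.mpr ⟨⟨T - 1, by omega⟩, by ext t; simp [Fin.ext_iff]⟩

theorem treatment_quadratic_form_general (n0 n1 T : ℕ) (hn0 : 1 ≤ n0) (hT : 2 ≤ T) :
    (fun p : Fin (n0 + n1) × Fin T =>
        if n0 ≤ (p.1 : ℕ) ∧ (p.2 : ℕ) = T - 1 then (1 : ℝ) else 0) ⬝ᵥ
      (((1 : Matrix (Fin (n0 + n1) × Fin T) (Fin (n0 + n1) × Fin T) ℝ) -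
          designZ (n0 + n1) T * ((designZ (n0 + n1) T)ᵀ * designZ (n0 + n1) T)⁻¹ *
            (designZ (n0 + n1) T)ᵀ) *ᵥ
        (fun p : Fin (n0 + n1) × Fin T =>
          if n0 ≤ (p.1 : ℕ) ∧ (p.2 : ℕ) = T - 1 then (1 : ℝ) else 0)) =
      ((T : ℝ) - 1) * n0 * n1 / (((n0 : ℝ) + n1) * T) := by
  have : NeZero (n0 + n1) := ⟨by omega⟩
  have : NeZero T := ⟨by omega⟩
  set treated : Finset (Fin (n0 + n1)) := {i | n0 ≤ (i : ℕ)}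
  set last : Finset (Fin T) := {t | (t : ℕ) = T - 1}
  have treatment_eq_outer : (fun p : Fin (n0 + n1) × Fin T =>
      if n0 ≤ (p.1 : ℕ) ∧ (p.2 : ℕ) = T - 1 then (1 : ℝ) else 0) =
        fun p => (if p.1 ∈ treated then 1 else 0) * (if p.2 ∈ last then 1 else 0) := by
    funext p
    simp only [treated, last, mem_filter, mem_univ, true_and, ite_zero_mul_ite_zero, mul_one]
  rw [treatment_eq_outer, outer_dotProduct_annihilator_mulVec_outer
    (fun i => if i ∈ treated then 1 else 0) (fun t => if t ∈ last then 1 else 0),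
    sum_indicator_mul_sub_expect, sum_indicator_mul_sub_expect, Fin.card_filter_le_val,
    Fin.card_filter_val_eq_sub_one (by omega), Fintype.card_fin, Fintype.card_fin]
  have hN : ((n0 : ℝ) + n1) ≠ 0 := by positivity
  have hT0 : (T : ℝ) ≠ 0 := by positivity
  field_simp
  push_cast
  ring

/-- for `n0, n1 ≥ 1`, `N = n0 + n1` and `T ≥ 2`, with `M = I - Z (Z'Z)⁻¹ Z'` the
two-way fixed effects annihilator and `D` the treatment indicator vector (equal to `1` exactly
for units `i > n0` in the last period), the quadratic form `D' M D` equals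
`(T-1) n0 n1 / ((n0 + n1) T)`. -/
theorem treatment_quadratic_form (n0 n1 T : ℕ) (hn0 : 1 ≤ n0) (hn1 : 1 ≤ n1) (hT : 2 ≤ T) :
    (fun p : Fin (n0 + n1) × Fin T =>
        if n0 ≤ (p.1 : ℕ) ∧ (p.2 : ℕ) = T - 1 then (1 : ℝ) else 0) ⬝ᵥ
      (((1 : Matrix (Fin (n0 + n1) × Fin T) (Fin (n0 + n1) × Fin T) ℝ) -
          designZ (n0 + n1) T * ((designZ (n0 + n1) T)ᵀ * designZ (n0 + n1) T)⁻¹ *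
            (designZ (n0 + n1) T)ᵀ) *ᵥ
        (fun p : Fin (n0 + n1) × Fin T =>
          if n0 ≤ (p.1 : ℕ) ∧ (p.2 : ℕ) = T - 1 then (1 : ℝ) else 0)) =
      ((T : ℝ) - 1) * n0 * n1 / (((n0 : ℝ) + n1) * T) :=
  treatment_quadratic_form_general n0 n1 T hn0 hT
end
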